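/- arXiv:2403.04262 — 2 statements merged into one kernel-verified Lean document; each statement's English description precedes it below -/
import Mathlib

section
/- Consider the structured problem of minimizing φ = f + g, where f : ℝⁿ → ℝ is C²-smooth with ∇f Lipschitz continuous on ℝⁿ with modulus L_f > 0, and g : ℝⁿ → ℝ ∪ {+∞} is proper, lower semicontinuous, and prox-bounded with threshold λ_g. Run the generalized line-search proximal gradient method with parameters λ ∈ (0, min{1/L_f, λ_g}), σ ∈ (0, λ(1 − λL_f)/(2(1 + λL_f)²)), β ∈ (0,1): at step k, if x^k ∈ Prox_{λg}(x^k − λ∇f(x^k)) stop; otherwise take x̂^k ∈ Prox_{λg}(x^k − λ∇f(x^k)), v̂^k := ∇f(x̂^k) − ∇f(x^k) + (1/λ)(x^k − x̂^k), choose any direction d^k ∈ ℝⁿ, set τ_k = β^{m_k} with m_k the smallest nonnegative integer such that φ_λ(x̂^k + β^{m_k}d^k) ≤ φ_λ(x^k) − σ‖v̂^k‖², and set x^{k+1} := x̂^k + τ_k d^k. Then the sequence {x^k} is well-defined and (1/λ − L_f)‖x̂^k − x^k‖ ≤ ‖v̂^k‖ ≤ (1/λ + L_f)‖x̂^k − x^k‖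 for all k. If inf φ > −∞, then {φ_λ(x^k)} converges, Σ_{k≥0}‖v̂^k‖² < ∞ and Σ_{k≥0}‖x̂^k − x^k‖² < ∞, so v̂^k → 0 and x̂^k − x^k → 0; moreover, every accumulation point x̄ of {x^k} is a λ-critical point of the problem (hence a λ′-critical point for every λ′ ∈ (0, λ]). -/
open Filter Topology

notation "⟪" x ", " y "⟫" => @inner ℝ _ _ x y

noncomputable section

abbrev En (n : ℕ) : Type := EuclideanSpace ℝ (Fin n)

namespace Paper

variable {n : ℕ}

/-- A function `φ : ℝⁿ → ℝ ∪ {+∞}` (encoded into `EReal`) is proper if it is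
nowhere `-∞` and somewhere finite. -/
def Proper (φ : En n → EReal) : Prop := (∃ x, φ x ≠ ⊤) ∧ ∀ x, φ x ≠ ⊥

/-- Fréchet (regular) subdifferential. -/
def RegSubdiff (φ : En n → EReal) (x : En n) : Set (En n) :=
  {v | φ x ≠ ⊤ ∧ ∀ ε : ℝ, 0 < ε → ∃ δ : ℝ, 0 < δ ∧ ∀ y : En n, ‖y - x‖ < δ →
      φ x + ((⟪v, y - x⟫ - ε * ‖y - x‖ : ℝ) : EReal) ≤ φ y}

/-- Limiting (Mordukhovich) subdifferential. -/
def LimSubdiff (φ : En n → EReal) (x : En n) : Set (En n) :=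
  {v | ∃ xs : ℕ → En n, ∃ vs : ℕ → En n,
      Tendsto xs atTop (𝓝 x) ∧
      Tendsto (fun k => φ (xs k)) atTop (𝓝 (φ x)) ∧
      Tendsto vs atTop (𝓝 v) ∧ ∀ k, vs k ∈ RegSubdiff φ (xs k)}

/-- Graph of the limiting subdifferential. -/
def gphSubdiff (φ : En n → EReal) : Set (En n × En n) :=
  {p | p.2 ∈ LimSubdiff φ p.1}

/-- Regular (Fréchet) normal cone to a subset of the product `ℝⁿ × ℝⁿ`. -/
def RegNormalConeP (Ω : Set (En n × En n)) (z : En n × En n) : Set (En n × En n) :=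
  {v | ∀ ε : ℝ, 0 < ε → ∃ δ : ℝ, 0 < δ ∧ ∀ w ∈ Ω, ‖w - z‖ < δ →
      ⟪v.1, w.1 - z.1⟫ + ⟪v.2, w.2 - z.2⟫ ≤ ε * ‖w - z‖}

/-- Limiting normal cone to a subset of the product `ℝⁿ × ℝⁿ`. -/
def LimNormalConeP (Ω : Set (En n × En n)) (z : En n × En n) : Set (En n × En n) :=
  {v | ∃ zs : ℕ → En n × En n, ∃ vs : ℕ → En n × En n,
      (∀ k, zs k ∈ Ω) ∧ Tendsto zs atTop (𝓝 z) ∧ Tendsto vs atTop (𝓝 v) ∧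
      ∀ k, vs k ∈ RegNormalConeP Ω (zs k)}

/-- Directional limiting normal cone. -/
def DirLimNormalConeP (Ω : Set (En n × En n)) (z d : En n × En n) :
    Set (En n × En n) :=
  {v | ∃ t : ℕ → ℝ, ∃ ds : ℕ → En n × En n, ∃ vs : ℕ → En n × En n,
      (∀ k, 0 < t k) ∧ Tendsto t atTop (𝓝 0) ∧ Tendsto ds atTop (𝓝 d) ∧
      Tendsto vs atTop (𝓝 v) ∧ ∀ k, vs k ∈ RegNormalConeP Ω (z + t k • ds k)}

/-- Semismoothness* of a set-valued map (given by its graph) at a point of the graph. -/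
def SemismoothStar (Ω : Set (En n × En n)) (z : En n × En n) : Prop :=
  ∀ u v ustar vstar : En n,
    (ustar, -vstar) ∈ DirLimNormalConeP Ω z (u, v) → ⟪ustar, u⟫ = ⟪vstar, v⟫

/-- Second-order subdifferential (generalized Hessian) of `φ` at `x` for `v`. -/
def SecondSubdiff (φ : En n → EReal) (x v u : En n) : Set (En n) :=
  {w | (w, -u) ∈ LimNormalConeP (gphSubdiff φ) (x, v)}

/-- Graph of the gradient mapping of a real-valued function. -/
def gphGrad (h : En n → ℝ) : Set (En n × En n) := {p | p.2 = gradient h p.1}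

/-- Second-order subdifferential of a `C¹` real-valued function via its gradient graph. -/
def SecondSubdiffFun (h : En n → ℝ) (x v u : En n) : Set (En n) :=
  {w | (w, -u) ∈ LimNormalConeP (gphGrad h) (x, v)}

/-- Metric regularity of a set-valued map around a point of its graph. -/
def MetrReg (F : En n → Set (En n)) (x y : En n) : Prop :=
  ∃ μ : ℝ, 0 < μ ∧ ∃ U ∈ 𝓝 x, ∃ V ∈ 𝓝 y, ∀ a ∈ U, ∀ b ∈ V,
    EMetric.infEdist a {z | b ∈ F z} ≤ ENNReal.ofReal μ * EMetric.infEdist b (F a)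

/-- Moreau envelope. -/
def moreau (φ : En n → EReal) (lam : ℝ) (x : En n) : EReal :=
  ⨅ y : En n, φ y + ((‖y - x‖ ^ 2 / (2 * lam) : ℝ) : EReal)

/-- Proximal mapping (as the set of minimizers). -/
def proxSet (φ : En n → EReal) (lam : ℝ) (x : En n) : Set (En n) :=
  {y | ∀ z : En n, φ y + ((‖y - x‖ ^ 2 / (2 * lam) : ℝ) : EReal)
        ≤ φ z + ((‖z - x‖ ^ 2 / (2 * lam) : ℝ) : EReal)}

/-- Prox-boundedness. -/
def ProxBounded (φ : En n → EReal) : Prop :=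
  ∃ lam : ℝ, 0 < lam ∧ ∃ x, moreau φ lam x ≠ ⊥

/-- Threshold of prox-boundedness. -/
def proxThreshold (φ : En n → EReal) : EReal :=
  sSup {l : EReal | ∃ lam : ℝ, l = (lam : EReal) ∧ 0 < lam ∧ ∃ x, moreau φ lam x ≠ ⊥}

/-- `r`-level prox-regularity at `xb` for `vb ∈ ∂φ(xb)`. -/
def ProxRegular (φ : En n → EReal) (r : ℝ) (xb vb : En n) : Prop :=
  vb ∈ LimSubdiff φ xb ∧
  ∃ ε : ℝ, 0 < ε ∧ ∃ U ∈ 𝓝 xb, ∃ V ∈ 𝓝 vb,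
    ∀ x ∈ U, ∀ u ∈ U, ∀ v ∈ V, v ∈ LimSubdiff φ u → φ u < φ xb + (ε : EReal) →
      φ u + ((⟪v, x - u⟫ - r / 2 * ‖x - u‖ ^ 2 : ℝ) : EReal) ≤ φ x

/-- Subdifferential continuity at `xb` for `vb ∈ ∂φ(xb)`. -/
def SubdiffCont (φ : En n → EReal) (xb vb : En n) : Prop :=
  vb ∈ LimSubdiff φ xb ∧
  ∀ ε : ℝ, 0 < ε → ∃ δ : ℝ, 0 < δ ∧ ∀ x v : En n, v ∈ LimSubdiff φ x →
    ‖x - xb‖ < δ → ‖v - vb‖ < δ →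
      φ xb - (ε : EReal) < φ x ∧ φ x < φ xb + (ε : EReal)

/-- Continuous `r`-level prox-regularity. -/
def ContProxRegular (φ : En n → EReal) (r : ℝ) (xb vb : En n) : Prop :=
  ProxRegular φ r xb vb ∧ SubdiffCont φ xb vb

/-- Continuous prox-regularity (for some level `r ≥ 0`). -/
def ContinuouslyProxRegular (φ : En n → EReal) (xb vb : En n) : Prop :=
  (∃ r : ℝ, 0 ≤ r ∧ ProxRegular φ r xb vb) ∧ SubdiffCont φ xb vb

/-- The structured sum `φ = f + g`. -/
def phiSum (f : En n → ℝ) (g : En n → EReal) : En n → EReal :=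
  fun x => (f x : EReal) + g x

/-- Hessian of a `C²` function as a continuous linear map. -/
def hess (f : En n → ℝ) (x : En n) : En n →L[ℝ] En n := fderiv ℝ (gradient f) x

/-- Normal map associated with the structured problem. -/
def normalMap (f : En n → ℝ) (g : En n → EReal) (lam : ℝ) (x : En n) : Set (En n) :=
  {w | ∃ xh ∈ proxSet g lam x, w = gradient f xh + (1 / lam) • (x - xh)}

/-- `λ`-critical points of the structured problem. -/
def lamCritical (f : En n → ℝ) (g : En n → EReal) (lam : ℝ) (x : En n) : Prop :=
  x ∈ proxSet g lam (x - lam • gradient f x)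

/-- Forward-backward envelope. -/
def FBE (f : En n → ℝ) (g : En n → EReal) (lam : ℝ) (x : En n) : EReal :=
  ⨅ y : En n,
    ((f x + ⟪gradient f x, y - x⟫ + ‖y - x‖ ^ 2 / (2 * lam) : ℝ) : EReal) + g y

/-- Real-valued forward-backward envelope. -/
def FBEr (f : En n → ℝ) (g : En n → EReal) (lam : ℝ) (x : En n) : ℝ :=
  (FBE f g lam x).toReal

/-- Tilt-stable local minimizer. -/
def TiltStable (φ : En n → EReal) (xb : En n) : Prop :=
  ∃ γ : ℝ, 0 < γ ∧ ∃ M : En n → En n, ∃ W ∈ 𝓝 (0 : En n), ∃ K : NNReal,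
    LipschitzOnWith K M W ∧ M 0 = xb ∧
    ∀ v ∈ W, {y : En n | ‖y - xb‖ ≤ γ ∧ ∀ z : En n, ‖z - xb‖ ≤ γ →
        φ y + ((-⟪v, y⟫ : ℝ) : EReal) ≤ φ z + ((-⟪v, z⟫ : ℝ) : EReal)} = {M v}

/-- `r`-weak convexity (`r = 0` is plain convexity). -/
def WeaklyConvex (g : En n → EReal) (r : ℝ) : Prop :=
  ∀ x y : En n, ∀ t : ℝ, 0 ≤ t → t ≤ 1 →
    g (t • x + (1 - t) • y) + ((r / 2 * ‖t • x + (1 - t) • y‖ ^ 2 : ℝ) : EReal) ≤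
      (t : EReal) * (g x + ((r / 2 * ‖x‖ ^ 2 : ℝ) : EReal)) +
        ((1 - t : ℝ) : EReal) * (g y + ((r / 2 * ‖y‖ ^ 2 : ℝ) : EReal))

/-- Second subderivative. -/
def secondSubderiv (φ : En n → EReal) (x v w : En n) : EReal :=
  Filter.liminf
    (fun p : ℝ × En n =>
      ((2 / p.1 ^ 2 : ℝ) : EReal) *
        (φ (x + p.1 • p.2) - φ x - ((p.1 * ⟪v, p.2⟫ : ℝ) : EReal)))
    ((𝓝[>] (0 : ℝ)) ×ˢ 𝓝 w)

/-- Twice epi-differentiability. -/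
def TwiceEpiDiff (φ : En n → EReal) (x v : En n) : Prop :=
  ∀ w : En n, ∀ τ : ℕ → ℝ, (∀ k, 0 < τ k) → Tendsto τ atTop (𝓝 0) →
    ∃ ws : ℕ → En n, Tendsto ws atTop (𝓝 w) ∧
      Tendsto (fun k =>
        ((2 / τ k ^ 2 : ℝ) : EReal) *
          (φ (x + τ k • ws k) - φ x - ((τ k * ⟪v, ws k⟫ : ℝ) : EReal)))
        atTop (𝓝 (secondSubderiv φ x v w))

/-- Strong variational convexity (via the subgradient characterization). -/
def StronglyVarConvex (φ : En n → EReal) (xb vb : En n) : Prop :=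
  vb ∈ LimSubdiff φ xb ∧
  ∃ σ : ℝ, 0 < σ ∧ ∃ ε : ℝ, 0 < ε ∧ ∃ U ∈ 𝓝 xb, ∃ V ∈ 𝓝 vb,
    ∀ u₁ ∈ U, ∀ u₂ ∈ U, ∀ v₁ ∈ V, ∀ v₂ ∈ V,
      v₁ ∈ LimSubdiff φ u₁ → v₂ ∈ LimSubdiff φ u₂ →
      φ u₁ < φ xb + (ε : EReal) → φ u₂ < φ xb + (ε : EReal) →
      σ * ‖u₁ - u₂‖ ^ 2 ≤ ⟪v₁ - v₂, u₁ - u₂⟫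

/-- Bouligand Jacobian. -/
def BouligandJac (h : En n → En n) (x : En n) : Set (En n →L[ℝ] En n) :=
  {H | ∃ xs : ℕ → En n, Tendsto xs atTop (𝓝 x) ∧ (∀ k, DifferentiableAt ℝ h (xs k)) ∧
      Tendsto (fun k => fderiv ℝ h (xs k)) atTop (𝓝 H)}

/-- The ℓ₀-"norm": number of nonzero components. -/
def ell0 (x : En n) : ℕ := (Finset.univ.filter fun i => x i ≠ 0).card

end Paper

open Paper

/-!
Below the prox-boundedness threshold, `g + ‖· - u‖² / (2λ)` is lower semicontinuous and coercive,
so the proximal subproblem has a minimizer. The two-sided estimate on `v̂ᵏ` is the triangle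
inequality together with the Lipschitz bound on `∇f`. By the descent lemma and `λ L_f < 1` the
FBE majorizes `inf φ`, so the Armijo condition makes `φ_λ(xᵏ)` nonincreasing and bounded below;
telescoping gives `∑ σ ‖v̂ᵏ‖² < ∞`, and the lower estimate transfers summability to
`‖x̂ᵏ - xᵏ‖²`. Along a subsequence converging to a cluster point `x̄`, `x̂ᵏ → x̄` and
`xᵏ - λ ∇f(xᵏ) → x̄ - λ ∇f(x̄)`; the graph of `Prox_{λg}` is closed since `g` is lower
semicontinuous, so `x̄` is `λ`-critical. Finally, `λ`-criticality of `x̄` says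
`g x̄ ≤ g z + ⟪∇f x̄, z - x̄⟫ + ‖z - x̄‖² / (2λ)` for all `z`, which is monotone in `λ`.
-/

theorem LowerSemicontinuous.le_of_tendsto {α β ι : Type*} [TopologicalSpace α]
    [LinearOrder β] [DenselyOrdered β] [TopologicalSpace β] [OrderTopology β]
    {F : α → β} (hF : LowerSemicontinuous F) {l : Filter ι} [l.NeBot] {p : ι → α} {r : ι → β}
    {a : α} {b : β} (hp : Tendsto p l (𝓝 a)) (hr : Tendsto r l (𝓝 b))
    (hle : ∀ᶠ i in l, F (p i) ≤ r i) : F a ≤ b := by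
  by_contra! hlt
  obtain ⟨c, hbc, hca⟩ := exists_between hlt
  obtain ⟨i, hFi, hri, hi⟩ :=
    ((hp.eventually (hF a c hca)).and ((hr.eventually (gt_mem_nhds hbc)).and hle)).exists
  exact (hFi.trans_le hi).not_gt hri

theorem LowerSemicontinuous.exists_forall_le' {α β : Type*} [TopologicalSpace α]
    [LinearOrder β] {F : α → β} (hF : LowerSemicontinuous F) (x₀ : α)
    (h : ∀ᶠ x in cocompact α, F x₀ ≤ F x) : ∃ x, ∀ y, F x ≤ F y := by
  obtain ⟨K, hK, hKF⟩ := mem_cocompact.1 h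
  obtain ⟨x, -, hx⟩ := LowerSemicontinuousOn.exists_isMinOn (Set.insert_nonempty x₀ K)
    (hK.insert x₀) (hF.lowerSemicontinuousOn _)
  refine ⟨x, fun y => ?_⟩
  by_cases hy : y ∈ K
  · exact hx (Set.mem_insert_of_mem x₀ hy)
  · exact (hx (Set.mem_insert x₀ K)).trans (hKF hy)

theorem LowerSemicontinuous.add_coe {α : Type*} [TopologicalSpace α] {F : α → EReal}
    (hF : LowerSemicontinuous F) {h : α → ℝ} (hh : Continuous h) :
    LowerSemicontinuous fun x => F x + h x :=
  hF.add' (continuous_coe_real_ereal.comp hh).lowerSemicontinuous fun _ =>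
    EReal.continuousAt_add (Or.inr (EReal.coe_ne_bot _)) (Or.inr (EReal.coe_ne_top _))

theorem EReal.continuous_add_coe : Continuous fun p : EReal × ℝ => p.1 + (p.2 : EReal) :=
  continuous_iff_continuousAt.2 fun _ =>
    (EReal.continuousAt_add (Or.inr (EReal.coe_ne_bot _)) (Or.inr (EReal.coe_ne_top _))).comp
      (continuous_fst.prodMk (continuous_coe_real_ereal.comp continuous_snd)).continuousAt

theorem EReal.add_coe_le_add_coe_iff {a b : EReal} {r : ℝ} : a + r ≤ b + r ↔ a ≤ b := by
  refine ⟨fun h => ?_, fun h => add_le_add_left h _⟩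
  simpa only [EReal.add_sub_cancel_right] using EReal.sub_le_sub h (le_refl (r : EReal))

theorem summable_of_add_le_of_forall_le {a b : ℕ → ℝ} {B : ℝ} (hb : ∀ k, 0 ≤ b k)
    (hab : ∀ k, a (k + 1) + b k ≤ a k) (hB : ∀ k, B ≤ a k) : Summable b := by
  refine summable_of_sum_range_le hb (c := a 0 - B) fun N => ?_
  calc ∑ k ∈ Finset.range N, b k ≤ ∑ k ∈ Finset.range N, (a k - a (k + 1)) :=
        Finset.sum_le_sum fun k _ => by linarith [hab k]
    _ = a 0 - a N := Finset.sum_range_sub' a N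
    _ ≤ a 0 - B := by linarith [hB N]

theorem EReal.exists_tendsto_and_summable_of_le_sub {a : ℕ → EReal} {b : ℕ → ℝ} {B : ℝ}
    (hb : ∀ k, 0 ≤ b k) (hab : ∀ k, a (k + 1) ≤ a k - b k) (hB : ∀ k, (B : EReal) ≤ a k)
    (htop : ∀ k, a k ≠ ⊤) : (∃ c, Tendsto a atTop (𝓝 c)) ∧ Summable b := by
  have ha (k : ℕ) : a k = (a k).toReal :=
    (EReal.coe_toReal (htop k) (ne_bot_of_le_ne_bot (EReal.coe_ne_bot B) (hB k))).symm
  have hstep (k : ℕ) : (a (k + 1)).toReal + b k ≤ (a k).toReal := by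
    have h := hab k
    rw [ha (k + 1), ha k, ← EReal.coe_sub, EReal.coe_le_coe_iff] at h
    linarith
  have hB' (k : ℕ) : B ≤ (a k).toReal := EReal.coe_le_coe_iff.1 ((hB k).trans_eq (ha k))
  have hlim := tendsto_atTop_ciInf (antitone_nat_of_succ_le fun k => by linarith [hstep k, hb k])
    ⟨B, Set.forall_mem_range.2 hB'⟩
  exact ⟨⟨_, (EReal.tendsto_coe.2 hlim).congr fun k => (ha k).symm⟩,
    summable_of_add_le_of_forall_le hb hstep hB'⟩

theorem summable_sq_of_mul_le {u v : ℕ → ℝ} {c : ℝ} (hc : 0 < c) (hu : ∀ k, 0 ≤ u k)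
    (huv : ∀ k, c * u k ≤ v k) (hv : Summable fun k => v k ^ 2) : Summable fun k => u k ^ 2 := by
  refine (hv.mul_left (c⁻¹ ^ 2)).of_nonneg_of_le (fun k => sq_nonneg _) fun k => ?_
  calc u k ^ 2 = c⁻¹ ^ 2 * (c * u k) ^ 2 := by field_simp
    _ ≤ c⁻¹ ^ 2 * v k ^ 2 :=
      mul_le_mul_of_nonneg_left (pow_le_pow_left₀ (mul_nonneg hc.le (hu k)) (huv k) 2)
        (by positivity)

theorem tendsto_zero_of_summable_norm_sq {E : Type*} [SeminormedAddCommGroup E] {v : ℕ → E}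
    (hv : Summable fun k => ‖v k‖ ^ 2) : Tendsto v atTop (𝓝 0) := by
  have h := (Real.continuous_sqrt.tendsto 0).comp hv.tendsto_atTop_zero
  simp only [Function.comp_def, Real.sqrt_sq (norm_nonneg _), Real.sqrt_zero] at h
  exact tendsto_zero_iff_norm_tendsto_zero.2 h

section Lipschitz

variable {E : Type*} [NormedAddCommGroup E] [NormedSpace ℝ E] {G : E → E} {K : NNReal} {c : ℝ}

theorem LipschitzWith.sub_mul_norm_le_norm_sub_add_smul (hG : LipschitzWith K G) (hc : 0 ≤ c)
    (x y : E) : (c - K) * ‖y - x‖ ≤ ‖G y - G x + c • (x - y)‖ := by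
  have hsmul : ‖c • (x - y)‖ = c * ‖y - x‖ := by
    rw [norm_smul, Real.norm_of_nonneg hc, norm_sub_rev]
  have htri := _root_.norm_sub_le (G y - G x + c • (x - y)) (G y - G x)
  rw [add_sub_cancel_left, hsmul] at htri
  linarith [hG.norm_sub_le y x]

theorem LipschitzWith.norm_sub_add_smul_le (hG : LipschitzWith K G) (hc : 0 ≤ c) (x y : E) :
    ‖G y - G x + c • (x - y)‖ ≤ (c + K) * ‖y - x‖ := by
  have hsmul : ‖c • (x - y)‖ = c * ‖y - x‖ := by
    rw [norm_smul, Real.norm_of_nonneg hc, norm_sub_rev]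
  linarith [hG.norm_sub_le y x, norm_add_le (G y - G x) (c • (x - y))]

end Lipschitz

theorem le_add_inner_gradient_add_sq_of_lipschitzWith {E : Type*} [NormedAddCommGroup E]
    [InnerProductSpace ℝ E] [CompleteSpace E] {f : E → ℝ} {K : NNReal}
    (hf : Differentiable ℝ f) (hlip : LipschitzWith K (gradient f)) (x y : E) :
    f y ≤ f x + ⟪gradient f x, y - x⟫ + K / 2 * ‖y - x‖ ^ 2 := by
  set d := y - x
  let φ : ℝ → ℝ := fun t => f (x + t • d) - t * ⟪gradient f x, d⟫ - K / 2 * t ^ 2 * ‖d‖ ^ 2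
  have hφ (t : ℝ) :
      HasDerivAt φ (⟪gradient f (x + t • d) - gradient f x, d⟫ - K * t * ‖d‖ ^ 2) t := by
    have hline : HasDerivAt (fun s : ℝ => f (x + s • d)) ⟪gradient f (x + t • d), d⟫ t := by
      rw [inner_gradient_left]
      have hseg : HasDerivAt (fun s : ℝ => x + s • d) d t := by
        simpa using ((hasDerivAt_id t).smul_const d).const_add x
      exact (hf _).hasFDerivAt.comp_hasDerivAt t hseg
    refine ((hline.sub ((hasDerivAt_id t).mul_const _)).sub
      (((hasDerivAt_pow 2 t).const_mul (K / 2 : ℝ)).mul_const (‖d‖ ^ 2))).congr_deriv ?_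
    rw [inner_sub_left]
    push_cast
    ring
  have hanti : AntitoneOn φ (Set.Ici 0) := by
    refine antitoneOn_of_hasDerivWithinAt_nonpos (convex_Ici 0)
      (fun t _ => (hφ t).continuousAt.continuousWithinAt) (fun t _ => (hφ t).hasDerivWithinAt)
      fun t ht => ?_
    rw [interior_Ici] at ht
    have hbound : ⟪gradient f (x + t • d) - gradient f x, d⟫ ≤ K * t * ‖d‖ ^ 2 :=
      calc ⟪gradient f (x + t • d) - gradient f x, d⟫
          ≤ ‖gradient f (x + t • d) - gradient f x‖ * ‖d‖ := real_inner_le_norm _ _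
        _ ≤ K * ‖t • d‖ * ‖d‖ := by
          gcongr
          simpa using hlip.norm_sub_le (x + t • d) x
        _ = K * t * ‖d‖ ^ 2 := by
          rw [norm_smul, Real.norm_of_nonneg (le_of_lt ht)]
          ring
    linarith
  have h01 := hanti Set.self_mem_Ici (Set.mem_Ici.2 zero_le_one) zero_le_one
  simp only [φ, zero_smul, add_zero, one_smul, zero_mul, sub_zero, one_mul, one_pow,
    mul_one, ne_eq, OfNat.ofNat_ne_zero, not_false_eq_true, zero_pow, mul_zero] at h01
  rw [add_sub_cancel] at h01
  linarith

theorem tendsto_mul_norm_sub_sq_sub_mul_norm_sub_sq_cocompact {E : Type*}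
    [NormedAddCommGroup E] [ProperSpace E] {α γ : ℝ} (hγ : 0 ≤ γ) (hγα : γ < α) (u w : E) :
    Tendsto (fun z => α * ‖z - u‖ ^ 2 - γ * ‖z - w‖ ^ 2) (cocompact E) atTop := by
  set D := ‖u - w‖
  have hdist : Tendsto (fun z => ‖z - u‖) (cocompact E) atTop :=
    tendsto_atTop_mono (fun z => by linarith [norm_sub_norm_le z u])
      (tendsto_atTop_add_const_right _ (-‖u‖) tendsto_norm_cocompact_atTop)
  have hquad : Tendsto (fun t : ℝ => t * ((α - γ) * t - 2 * γ * D) - γ * D ^ 2) atTop atTop :=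
    tendsto_atTop_add_const_right _ _ (tendsto_id.atTop_mul_atTop₀
      (tendsto_atTop_add_const_right _ _ (tendsto_id.const_mul_atTop (sub_pos.2 hγα))))
  refine tendsto_atTop_mono (fun z => ?_) (hquad.comp hdist)
  have hsq : ‖z - w‖ ^ 2 ≤ (‖z - u‖ + D) ^ 2 :=
    pow_le_pow_left₀ (norm_nonneg _) (norm_sub_le_norm_sub_add_norm_sub z u w) 2
  simp only [Function.comp_apply]
  nlinarith [mul_le_mul_of_nonneg_left hsq hγ]

namespace Paper

variable {n : ℕ}

theorem exists_coe_sub_le_of_moreau_ne_bot {g : En n → EReal} {lam : ℝ} {x₀ : En n}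
    (h : moreau g lam x₀ ≠ ⊥) :
    ∃ c : ℝ, ∀ y, ((c - ‖y - x₀‖ ^ 2 / (2 * lam) : ℝ) : EReal) ≤ g y := by
  obtain ⟨c, -, hc⟩ := EReal.exists_between_coe_real (Ne.bot_lt h)
  refine ⟨c, fun y => ?_⟩
  rw [EReal.coe_sub]
  exact EReal.sub_le_of_le_add (hc.le.trans (iInf_le _ y))

theorem proxSet_nonempty_of_lt_proxThreshold {g : En n → EReal} (hg : ∃ y, g y ≠ ⊤)
    (hlsc : LowerSemicontinuous g) {lam : ℝ} (hlam : 0 < lam)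
    (hlt : (lam : EReal) < proxThreshold g) (u : En n) :
    (proxSet g lam u).Nonempty := by
  obtain ⟨_, ⟨lam₀, rfl, -, x₀, hx₀⟩, hlt₀⟩ := lt_sSup_iff.1 hlt
  have hlam₀ : lam < lam₀ := EReal.coe_lt_coe_iff.1 hlt₀
  obtain ⟨c, hc⟩ := exists_coe_sub_le_of_moreau_ne_bot hx₀
  obtain ⟨y₁, hy₁⟩ := hg
  let F : En n → EReal := fun y => g y + ((‖y - u‖ ^ 2 / (2 * lam) : ℝ) : EReal)
  have hF : LowerSemicontinuous F := hlsc.add_coe (by fun_prop)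
  have hFy₁ : F y₁ ≠ ⊤ := EReal.add_ne_top hy₁ (EReal.coe_ne_top _)
  have hlow (z : En n) :
      ((c + ((2 * lam)⁻¹ * ‖z - u‖ ^ 2 - (2 * lam₀)⁻¹ * ‖z - x₀‖ ^ 2) : ℝ) : EReal) ≤ F z :=
    calc _ = ((c - ‖z - x₀‖ ^ 2 / (2 * lam₀) : ℝ) : EReal) +
          ((‖z - u‖ ^ 2 / (2 * lam) : ℝ) : EReal) := by
          rw [← EReal.coe_add]
          ring_nf
      _ ≤ F z := add_le_add_left (hc z) _
  have hcoer := tendsto_atTop_add_const_left _ c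
    (tendsto_mul_norm_sub_sq_sub_mul_norm_sub_sq_cocompact (α := (2 * lam)⁻¹)
      (γ := (2 * lam₀)⁻¹) (inv_nonneg.2 (by linarith)) (by gcongr) u x₀)
  obtain ⟨x, hx⟩ := hF.exists_forall_le' y₁
    ((hcoer.eventually_ge_atTop (F y₁).toReal).mono fun z hz =>
      (EReal.le_coe_toReal hFy₁).trans ((EReal.coe_le_coe_iff.2 hz).trans (hlow z)))
  exact ⟨x, hx⟩

theorem mem_proxSet_of_tendsto {ι : Type*} {l : Filter ι} [l.NeBot] {g : En n → EReal}
    (hlsc : LowerSemicontinuous g) {lam : ℝ} {y u : ι → En n} {y₀ u₀ : En n}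
    (hy : Tendsto y l (𝓝 y₀)) (hu : Tendsto u l (𝓝 u₀))
    (hmem : ∀ i, y i ∈ proxSet g lam (u i)) : y₀ ∈ proxSet g lam u₀ := by
  intro z
  have hF : LowerSemicontinuous fun p : En n × En n =>
      g p.1 + ((‖p.1 - p.2‖ ^ 2 / (2 * lam) : ℝ) : EReal) :=
    (hlsc.comp continuous_fst).add_coe (by fun_prop)
  have hz : Tendsto (fun i => g z + ((‖z - u i‖ ^ 2 / (2 * lam) : ℝ) : EReal)) l
      (𝓝 (g z + ((‖z - u₀‖ ^ 2 / (2 * lam) : ℝ) : EReal))) :=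
    (EReal.continuous_add_coe.tendsto _).comp (tendsto_const_nhds.prodMk_nhds
      (((by fun_prop : Continuous fun v : En n => ‖z - v‖ ^ 2 / (2 * lam)).tendsto u₀).comp hu))
  exact hF.le_of_tendsto (hy.prodMk_nhds hu) hz (Eventually.of_forall fun i => hmem i z)

theorem mem_proxSet_sub_smul_iff {g : En n → EReal} {lam : ℝ} (hlam : 0 < lam) (x v : En n) :
    x ∈ proxSet g lam (x - lam • v) ↔
      ∀ z, g x ≤ g z + ((⟪v, z - x⟫ + ‖z - x‖ ^ 2 / (2 * lam) : ℝ) : EReal) := by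
  have hx : ‖x - (x - lam • v)‖ ^ 2 / (2 * lam) = lam * ‖v‖ ^ 2 / 2 := by
    rw [sub_sub_cancel, norm_smul, Real.norm_of_nonneg hlam.le]
    field_simp
  have hz (z : En n) : ‖z - (x - lam • v)‖ ^ 2 / (2 * lam) =
      ⟪v, z - x⟫ + ‖z - x‖ ^ 2 / (2 * lam) + lam * ‖v‖ ^ 2 / 2 := by
    rw [show z - (x - lam • v) = (z - x) + lam • v by abel, norm_add_sq_real, inner_smul_right,
      norm_smul, Real.norm_of_nonneg hlam.le, real_inner_comm]
    field_simp
    ring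
  refine forall_congr' fun z => ?_
  rw [hx, hz, EReal.coe_add, ← add_assoc, EReal.add_coe_le_add_coe_iff]

theorem lamCritical_iff {f : En n → ℝ} {g : En n → EReal} {lam : ℝ} (hlam : 0 < lam)
    (x : En n) : lamCritical f g lam x ↔
      ∀ z, g x ≤ g z + ((⟪gradient f x, z - x⟫ + ‖z - x‖ ^ 2 / (2 * lam) : ℝ) : EReal) :=
  mem_proxSet_sub_smul_iff hlam x _

theorem lamCritical.of_le {f : En n → ℝ} {g : En n → EReal} {lam lam' : ℝ} {x : En n}
    (h : lamCritical f g lam x) (hlam' : 0 < lam') (hle : lam' ≤ lam) :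
    lamCritical f g lam' x := by
  rw [lamCritical_iff (hlam'.trans_le hle)] at h
  rw [lamCritical_iff hlam']
  refine fun z => (h z).trans (add_le_add_right (EReal.coe_le_coe_iff.2 ?_) _)
  gcongr

theorem lamCritical_of_mapClusterPt {f : En n → ℝ} {g : En n → EReal} {lam : ℝ}
    (hlsc : LowerSemicontinuous g) (hgrad : Continuous (gradient f)) {x xh : ℕ → En n}
    (hxh : ∀ k, xh k ∈ proxSet g lam (x k - lam • gradient f (x k)))
    (hres : Tendsto (fun k => xh k - x k) atTop (𝓝 0)) {xbar : En n}
    (hxbar : MapClusterPt xbar atTop x) : lamCritical f g lam xbar := by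
  obtain ⟨ψ, hψ, hxψ⟩ := hxbar.tendsto_subseq
  have hxhψ : Tendsto (fun k => xh (ψ k)) atTop (𝓝 xbar) := by
    simpa using hxψ.add (hres.comp hψ.tendsto_atTop)
  exact mem_proxSet_of_tendsto hlsc hxhψ
    (hxψ.sub (((hgrad.tendsto xbar).comp hxψ).const_smul lam)) fun k => hxh (ψ k)

theorem FBE_ne_top {f : En n → ℝ} {g : En n → EReal} (hg : ∃ y, g y ≠ ⊤) (lam : ℝ)
    (x : En n) : FBE f g lam x ≠ ⊤ := by
  obtain ⟨y, hy⟩ := hg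
  exact ne_top_of_le_ne_top (EReal.add_ne_top (EReal.coe_ne_top _) hy) (iInf_le _ y)

theorem iInf_phiSum_le_FBE {f : En n → ℝ} {g : En n → EReal} {K : NNReal}
    (hf : Differentiable ℝ f) (hlip : LipschitzWith K (gradient f)) {lam : ℝ} (hlam : 0 < lam)
    (hK : lam * K ≤ 1) (x : En n) : ⨅ y, phiSum f g y ≤ FBE f g lam x := by
  refine le_iInf fun y => (iInf_le _ y).trans (add_le_add_left (EReal.coe_le_coe_iff.2 ?_) _)
  have hquad : (K : ℝ) / 2 * ‖y - x‖ ^ 2 ≤ ‖y - x‖ ^ 2 / (2 * lam) := by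
    rw [le_div_iff₀ (by positivity)]
    nlinarith [mul_le_mul_of_nonneg_right hK (sq_nonneg ‖y - x‖)]
  linarith [le_add_inner_gradient_add_sq_of_lipschitzWith hf hlip x y]

end Paper

theorem statement15_general {n : ℕ} (f : En n → ℝ) (g : En n → EReal)
    (Lf : ℝ) (lamg : EReal) (lam σ β : ℝ)
    (x xh vh d : ℕ → En n) (τ : ℕ → ℝ) (m : ℕ → ℕ)
    (hf : ContDiff ℝ 2 f) (hLf : 0 < Lf)
    (hlip : LipschitzWith (Real.toNNReal Lf) (gradient f))
    (hproper : Proper g) (hlsc : LowerSemicontinuous g)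
    (hth : lamg = proxThreshold g)
    (hlam : 0 < lam ∧ lam < 1 / Lf ∧ (lam : EReal) < lamg)
    (hσ : 0 < σ ∧ σ < lam * (1 - lam * Lf) / (2 * (1 + lam * Lf) ^ 2))
    (hxh : ∀ k, xh k ∈ proxSet g lam (x k - lam • gradient f (x k)))
    (hvh : ∀ k, vh k =
      gradient f (xh k) - gradient f (x k) + (1 / lam) • (x k - xh k))
    (hτ : ∀ k, τ k = β ^ m k)
    (harmijo : ∀ k, FBE f g lam (xh k + τ k • d k) ≤
      FBE f g lam (x k) - ((σ * ‖vh k‖ ^ 2 : ℝ) : EReal))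
    (hupd : ∀ k, x (k + 1) = xh k + τ k • d k) :
    -- well-definedness of the scheme
    (∀ z : En n, (proxSet g lam (z - lam • gradient f z)).Nonempty) ∧
    (∀ k, ∃ m' : ℕ, FBE f g lam (xh k + β ^ m' • d k) ≤
      FBE f g lam (x k) - ((σ * ‖vh k‖ ^ 2 : ℝ) : EReal)) ∧
    -- the two-sided estimates
    (∀ k, (1 / lam - Lf) * ‖xh k - x k‖ ≤ ‖vh k‖ ∧
      ‖vh k‖ ≤ (1 / lam + Lf) * ‖xh k - x k‖) ∧
    -- consequences when inf φ > -∞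
    ((⊥ : EReal) < ⨅ y : En n, phiSum f g y →
      (∃ c : EReal, Tendsto (fun k => FBE f g lam (x k)) atTop (𝓝 c)) ∧
      Summable (fun k => ‖vh k‖ ^ 2) ∧
      Summable (fun k => ‖xh k - x k‖ ^ 2) ∧
      Tendsto vh atTop (𝓝 0) ∧
      Tendsto (fun k => xh k - x k) atTop (𝓝 0) ∧
      ∀ xbar : En n, MapClusterPt xbar atTop x →
        lamCritical f g lam xbar ∧
          ∀ lam' : ℝ, 0 < lam' → lam' ≤ lam → lamCritical f g lam' xbar) := by
  obtain ⟨hlam0, hlamLf, hlamg⟩ := hlam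
  have hK : (Real.toNNReal Lf : ℝ) = Lf := Real.coe_toNNReal _ hLf.le
  have hest (k : ℕ) : (1 / lam - Lf) * ‖xh k - x k‖ ≤ ‖vh k‖ ∧
      ‖vh k‖ ≤ (1 / lam + Lf) * ‖xh k - x k‖ := by
    rw [hvh k, ← hK]
    exact ⟨hlip.sub_mul_norm_le_norm_sub_add_smul (by positivity) _ _,
      hlip.norm_sub_add_smul_le (by positivity) _ _⟩
  refine ⟨fun z => proxSet_nonempty_of_lt_proxThreshold hproper.1 hlsc hlam0 (hth ▸ hlamg) _,
    fun k => ⟨m k, hτ k ▸ harmijo k⟩, hest, fun hinf => ?_⟩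
  obtain ⟨B, -, hB⟩ := EReal.exists_between_coe_real hinf
  have hlamK : lam * Real.toNNReal Lf ≤ 1 := by
    rw [hK]
    exact ((lt_div_iff₀ hLf).1 hlamLf).le
  obtain ⟨hconv, hsumσv⟩ := EReal.exists_tendsto_and_summable_of_le_sub
    (fun k => mul_nonneg hσ.1.le (sq_nonneg ‖vh k‖)) (fun k => hupd k ▸ harmijo k)
    (fun k => hB.le.trans (iInf_phiSum_le_FBE (hf.differentiable two_ne_zero) hlip hlam0 hlamK _))
    (fun k => FBE_ne_top hproper.1 _ _)
  have hsumv : Summable fun k => ‖vh k‖ ^ 2 := (summable_mul_left_iff hσ.1.ne').1 hsumσv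
  have hsumx : Summable fun k => ‖xh k - x k‖ ^ 2 :=
    summable_sq_of_mul_le (sub_pos.2 ((lt_one_div hlam0 hLf).1 hlamLf))
      (fun k => norm_nonneg _) (fun k => (hest k).1) hsumv
  have hres := tendsto_zero_of_summable_norm_sq hsumx
  refine ⟨hconv, hsumv, hsumx, tendsto_zero_of_summable_norm_sq hsumv, hres, fun xbar hxbar => ?_⟩
  have hcrit := lamCritical_of_mapClusterPt hlsc hlip.continuous hxh hres hxbar
  exact ⟨hcrit, fun lam' hlam' hle => hcrit.of_le hlam' hle⟩

/-- well-posedness of the generalized line-search proximal gradient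
method and criticality of its accumulation points. -/
theorem statement15 {n : ℕ} (f : En n → ℝ) (g : En n → EReal)
    (Lf : ℝ) (lamg : EReal) (lam σ β : ℝ)
    (x xh vh d : ℕ → En n) (τ : ℕ → ℝ) (m : ℕ → ℕ)
    (hf : ContDiff ℝ 2 f) (hLf : 0 < Lf)
    (hlip : LipschitzWith (Real.toNNReal Lf) (gradient f))
    (hproper : Proper g) (hlsc : LowerSemicontinuous g)
    (hpb : ProxBounded g) (hth : lamg = proxThreshold g)
    (hlam : 0 < lam ∧ lam < 1 / Lf ∧ (lam : EReal) < lamg)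
    (hσ : 0 < σ ∧ σ < lam * (1 - lam * Lf) / (2 * (1 + lam * Lf) ^ 2))
    (hβ : 0 < β ∧ β < 1)
    -- the algorithm does not stop:
    (hnostop : ∀ k, ¬ lamCritical f g lam (x k))
    (hxh : ∀ k, xh k ∈ proxSet g lam (x k - lam • gradient f (x k)))
    (hvh : ∀ k, vh k =
      gradient f (xh k) - gradient f (x k) + (1 / lam) • (x k - xh k))
    (hτ : ∀ k, τ k = β ^ m k)
    (harmijo : ∀ k, FBE f g lam (xh k + τ k • d k) ≤
      FBE f g lam (x k) - ((σ * ‖vh k‖ ^ 2 : ℝ) : EReal))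
    (hmk : ∀ k, ∀ j < m k, ¬ (FBE f g lam (xh k + β ^ j • d k) ≤
      FBE f g lam (x k) - ((σ * ‖vh k‖ ^ 2 : ℝ) : EReal)))
    (hupd : ∀ k, x (k + 1) = xh k + τ k • d k) :
    -- well-definedness of the scheme
    (∀ z : En n, (proxSet g lam (z - lam • gradient f z)).Nonempty) ∧
    (∀ k, ∃ m' : ℕ, FBE f g lam (xh k + β ^ m' • d k) ≤
      FBE f g lam (x k) - ((σ * ‖vh k‖ ^ 2 : ℝ) : EReal)) ∧
    -- the two-sided estimates
    (∀ k, (1 / lam - Lf) * ‖xh k - x k‖ ≤ ‖vh k‖ ∧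
      ‖vh k‖ ≤ (1 / lam + Lf) * ‖xh k - x k‖) ∧
    -- consequences when inf φ > -∞
    ((⊥ : EReal) < ⨅ y : En n, phiSum f g y →
      (∃ c : EReal, Tendsto (fun k => FBE f g lam (x k)) atTop (𝓝 c)) ∧
      Summable (fun k => ‖vh k‖ ^ 2) ∧
      Summable (fun k => ‖xh k - x k‖ ^ 2) ∧
      Tendsto vh atTop (𝓝 0) ∧
      Tendsto (fun k => xh k - x k) atTop (𝓝 0) ∧
      ∀ xbar : En n, MapClusterPt xbar atTop x →
        lamCritical f g lam xbar ∧
          ∀ lam' : ℝ, 0 < lam' → lam' ≤ lam → lamCritical f g lam' xbar) :=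
  statement15_general f g Lf lamg lam σ β x xh vh d τ m hf hLf hlip hproper hlsc hth hlam hσ hxh hvh
    hτ harmijo hupd
end
end

section
/- Let g : ℝⁿ → ℝ be g(x) = ‖x‖₀, the number of nonzero components of x. Then g is variationally convex at every x̄ ∈ ℝⁿ for every v̄ ∈ ∂g(x̄); in particular, for every such pair (x̄, v̄) there exist convex neighborhoods U of x̄ and V of v̄ and ε > 0 such that ⟨x − u, v − w⟩ ≥ 0 for all (x,v), (u,w) ∈ gph ∂g with x, u ∈ U, g(x) < g(x̄) + ε, g(u) < g(x̄) + ε, and v, w ∈ V. If in addition v̄ᵢ ≠ 0 whenever x̄ᵢ = 0, then g is subdifferentially continuous at x̄ for v̄, i.e. g(x_k) → g(x̄) for every sequence (x_k, v_k) ∈ gph ∂g with (x_k, v_k) → (x̄, v̄). -/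
/-! Near `xb` the support of `x` can only grow, so the level condition `ℓ₀ x < ℓ₀ xb + 1/2` pins
it to the support of `xb`. Since `ℓ₀` is locally constant along the coordinate axes of its
support, every (regular, hence limiting) subgradient at `x` vanishes there. So for two such pairs
`x - u` lives off the support and `v - w` on it, and `⟪x - u, v - w⟫ = 0`. For subdifferential
continuity, `vb i ≠ 0` off the support of `xb` keeps `xs k i` at zero eventually, so again the
supports, and hence the values of `ℓ₀`, agree eventually. -/

open Filter Topology

noncomputable section

namespace Paper

variable {n : ℕ}

lemma ell0_congr {x y : En n} (h : ∀ i, x i ≠ 0 ↔ y i ≠ 0) : ell0 x = ell0 y := by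
  unfold ell0
  exact congrArg Finset.card (Finset.filter_congr fun i _ => h i)

lemma tendsto_euclidean_apply {f : ℕ → En n} {x : En n} (h : Tendsto f atTop (𝓝 x))
    (i : Fin n) : Tendsto (fun k => f k i) atTop (𝓝 (x i)) :=
  ((EuclideanSpace.proj i).continuous.tendsto x).comp h

lemma abs_le_of_eventually_mul_le {a c : ℝ} (h : ∀ᶠ t in 𝓝 (0 : ℝ), t * a ≤ c * |t|) :
    |a| ≤ c := by
  have hneg : ∀ᶠ t in 𝓝 (0 : ℝ), -t * a ≤ c * |-t| := by
    have : Tendsto (fun t : ℝ => -t) (𝓝 0) (𝓝 0) := by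
      simpa using continuous_neg.tendsto (0 : ℝ)
    exact this.eventually h
  obtain ⟨s, ⟨hs, hs'⟩, hs_pos : 0 < s⟩ :=
    ((h.and hneg).filter_mono nhdsWithin_le_nhds |>.and
      (self_mem_nhdsWithin (s := Set.Ioi (0 : ℝ)))).exists
  rw [abs_neg, abs_of_pos hs_pos] at hs'
  rw [abs_of_pos hs_pos] at hs
  rw [abs_le]
  constructor <;> nlinarith

lemma inner_eq_zero_of_mem_regSubdiff {f : En n → ℝ} {x v d : En n}
    (hv : v ∈ RegSubdiff (fun y => (f y : EReal)) x)
    (hf : ∀ᶠ t in 𝓝 (0 : ℝ), f (x + t • d) = f x) : ⟪v, d⟫ = 0 := by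
  obtain ⟨-, hreg⟩ := hv
  have key : ∀ ε : ℝ, 0 < ε → |⟪v, d⟫| ≤ ε * ‖d‖ := by
    intro ε hε
    obtain ⟨δ, hδ, hineq⟩ := hreg ε hε
    have hnorm : ∀ᶠ t in 𝓝 (0 : ℝ), ‖t • d‖ < δ :=
      ((continuous_id.smul continuous_const).norm.tendsto' 0 0 (by simp)).eventually
        (gt_mem_nhds hδ)
    refine abs_le_of_eventually_mul_le ?_
    filter_upwards [hf, hnorm] with t hft ht
    have h := hineq (x + t • d) (by simpa using ht)
    dsimp only at h
    rw [hft, add_sub_cancel_left, ← EReal.coe_add, EReal.coe_le_coe_iff, norm_smul,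
      Real.norm_eq_abs, real_inner_smul_right] at h
    linarith
  refine abs_nonpos_iff.mp (le_of_forall_pos_le_add fun ε hε => ?_)
  calc |⟪v, d⟫| ≤ ε / (‖d‖ + 1) * ‖d‖ := key _ (by positivity)
    _ ≤ 0 + ε := by
      rw [zero_add, div_mul_eq_mul_div, div_le_iff₀ (by positivity)]
      nlinarith

lemma ell0_add_smul_single_eventually_eq {x : En n} {i : Fin n} (hi : x i ≠ 0) :
    ∀ᶠ t in 𝓝 (0 : ℝ), ell0 (x + t • EuclideanSpace.single i 1) = ell0 x := by
  have hne : ∀ᶠ t in 𝓝 (0 : ℝ), x i + t ≠ 0 :=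
    (continuous_const.add continuous_id).continuousAt.eventually_ne (by simpa using hi)
  refine hne.mono fun t ht => ell0_congr fun j => ?_
  by_cases hj : j = i
  · subst hj
    simp [ht, hi]
  · simp [hj]

lemma apply_eq_zero_of_mem_regSubdiff_ell0 {x v : En n}
    (hv : v ∈ RegSubdiff (fun y : En n => ((ell0 y : ℝ) : EReal)) x)
    {i : Fin n} (hi : x i ≠ 0) : v i = 0 := by
  have h := inner_eq_zero_of_mem_regSubdiff (f := fun y => (ell0 y : ℝ)) hv
    ((ell0_add_smul_single_eventually_eq hi).mono fun t ht => by rw [ht])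
  simpa [EuclideanSpace.inner_single_right] using h

lemma apply_eq_zero_of_mem_limSubdiff_ell0 {x v : En n}
    (hv : v ∈ LimSubdiff (fun y : En n => ((ell0 y : ℝ) : EReal)) x)
    {i : Fin n} (hi : x i ≠ 0) : v i = 0 := by
  obtain ⟨xs, vs, hxs, -, hvs, hreg⟩ := hv
  have hzero : ∀ᶠ k in atTop, vs k i = 0 :=
    ((tendsto_euclidean_apply hxs i).eventually_ne hi).mono fun k hk =>
      apply_eq_zero_of_mem_regSubdiff_ell0 (hreg k) hk
  exact tendsto_nhds_unique (tendsto_euclidean_apply hvs i)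
    (tendsto_const_nhds.congr' (hzero.mono fun k hk => hk.symm))

lemma inner_sub_sub_eq_zero_of_mem_limSubdiff_ell0 {x u v w : En n}
    (hxu : ∀ i, x i ≠ 0 ↔ u i ≠ 0)
    (hv : v ∈ LimSubdiff (fun y : En n => ((ell0 y : ℝ) : EReal)) x)
    (hw : w ∈ LimSubdiff (fun y : En n => ((ell0 y : ℝ) : EReal)) u) :
    ⟪x - u, v - w⟫ = 0 := by
  rw [PiLp.inner_apply]
  refine Finset.sum_eq_zero fun i _ => ?_
  by_cases hx : x i = 0
  · have hu : u i = 0 := not_not.mp fun hu => (hxu i).mpr hu hx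
    simp [hx, hu]
  · simp [apply_eq_zero_of_mem_limSubdiff_ell0 hv hx,
      apply_eq_zero_of_mem_limSubdiff_ell0 hw ((hxu i).mp hx)]

lemma eventually_apply_ne_zero (xb : En n) : ∀ᶠ x in 𝓝 xb, ∀ i, xb i ≠ 0 → x i ≠ 0 := by
  refine eventually_all.mpr fun i => ?_
  by_cases h : xb i = 0
  · simp [h]
  · exact ((EuclideanSpace.proj i).continuous.continuousAt.eventually_ne h).mono
      fun x hx _ => hx

lemma apply_ne_zero_iff_of_ell0_le {x xb : En n} (hsub : ∀ i, xb i ≠ 0 → x i ≠ 0)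
    (hcard : ell0 x ≤ ell0 xb) (i : Fin n) : x i ≠ 0 ↔ xb i ≠ 0 := by
  have h := Finset.eq_of_subset_of_card_le (s := Finset.univ.filter fun i => xb i ≠ 0)
    (t := Finset.univ.filter fun i => x i ≠ 0) (fun i => by simpa using hsub i) hcard
  simpa using (Finset.ext_iff.mp h i).symm

lemma eventually_ell0_eq {xb vb : En n} (hnd : ∀ i, xb i = 0 → vb i ≠ 0) {xs vs : ℕ → En n}
    (hmem : ∀ k, vs k ∈ LimSubdiff (fun y : En n => ((ell0 y : ℝ) : EReal)) (xs k))
    (hxs : Tendsto xs atTop (𝓝 xb)) (hvs : Tendsto vs atTop (𝓝 vb)) :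
    ∀ᶠ k in atTop, ell0 (xs k) = ell0 xb := by
  refine (eventually_all.mpr fun i => ?_).mono fun k hk => ell0_congr hk
  by_cases hxb : xb i = 0
  · exact ((tendsto_euclidean_apply hvs i).eventually_ne (hnd i hxb)).mono fun k hk =>
      ⟨fun hne => absurd (apply_eq_zero_of_mem_limSubdiff_ell0 (hmem k) hne) hk,
        fun h => absurd hxb h⟩
  · exact ((tendsto_euclidean_apply hxs i).eventually_ne hxb).mono fun k hk =>
      ⟨fun _ => hxb, fun _ => hk⟩

end Paper

open Paper

/-- variational convexity and subdifferential continuity of the ℓ₀-norm. -/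
theorem statement19 {n : ℕ} :
    ∀ xb vb : En n,
      vb ∈ LimSubdiff (fun y : En n => ((ell0 y : ℝ) : EReal)) xb →
      -- variational convexity via local monotonicity of the subgradient map
      (∃ U V : Set (En n), U ∈ 𝓝 xb ∧ V ∈ 𝓝 vb ∧ Convex ℝ U ∧ Convex ℝ V ∧
        ∃ ε : ℝ, 0 < ε ∧
          ∀ x u v w : En n,
            v ∈ LimSubdiff (fun y : En n => ((ell0 y : ℝ) : EReal)) x →
            w ∈ LimSubdiff (fun y : En n => ((ell0 y : ℝ) : EReal)) u →
            x ∈ U → u ∈ U → v ∈ V → w ∈ V →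
            (ell0 x : ℝ) < (ell0 xb : ℝ) + ε → (ell0 u : ℝ) < (ell0 xb : ℝ) + ε →
            0 ≤ ⟪x - u, v - w⟫) ∧
      -- subdifferential continuity under the nondegeneracy condition
      ((∀ i : Fin n, xb i = 0 → vb i ≠ 0) →
        ∀ xs vs : ℕ → En n,
          (∀ k, vs k ∈ LimSubdiff (fun y : En n => ((ell0 y : ℝ) : EReal)) (xs k)) →
          Tendsto xs atTop (𝓝 xb) → Tendsto vs atTop (𝓝 vb) →
          Tendsto (fun k => (ell0 (xs k) : ℝ)) atTop (𝓝 (ell0 xb : ℝ))) := by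
  intro xb vb _
  obtain ⟨δ, hδ, hball⟩ := Metric.mem_nhds_iff.mp (eventually_apply_ne_zero xb)
  have ell0_le : ∀ z : En n, (ell0 z : ℝ) < ell0 xb + 1 / 2 → ell0 z ≤ ell0 xb := fun z hz =>
    Nat.lt_add_one_iff.mp (by exact_mod_cast (by linarith : (ell0 z : ℝ) < ell0 xb + 1))
  refine ⟨⟨Metric.ball xb δ, Set.univ, Metric.ball_mem_nhds xb hδ, univ_mem, convex_ball xb δ,
    convex_univ, 1 / 2, by norm_num, ?_⟩, ?_⟩
  · intro x u v w hv hw hx hu _ _ hxε huε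
    have hsx := apply_ne_zero_iff_of_ell0_le (hball hx) (ell0_le x hxε)
    have hsu := apply_ne_zero_iff_of_ell0_le (hball hu) (ell0_le u huε)
    exact (inner_sub_sub_eq_zero_of_mem_limSubdiff_ell0
      (fun i => (hsx i).trans (hsu i).symm) hv hw).ge
  · intro hnd xs vs hmem hxs hvs
    exact tendsto_const_nhds.congr'
      ((eventually_ell0_eq hnd hmem hxs hvs).mono fun k hk => by simp [hk])
end
end
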